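/- arXiv:0803.3532 — 9 statements merged into one kernel-verified Lean document; each statement's English description precedes it below -/
import Mathlib

section
/- The map f : CH^n → C^n, f(z) = z / sqrt(1 - ||z||^2), satisfies f^*(ω_0) = ω_hyp, where ω_0 = (i/2) Σ_j dz_j ∧ dz̄_j is the standard symplectic form on C^n and ω_hyp = -(i/2) ∂∂̄ log(1 - Σ_j |z_j|^2) is the hyperbolic Kähler form on the unit ball CH^n. -/
/-!
Both forms have radial potentials `φ (‖z‖²)`, and for such a potential
`ω(z)(v, w) = φ'(s) ⟪i v, w⟫ + φ''(s) (⟪z, i v⟫ ⟪z, w⟫ - ⟪z, v⟫ ⟪z, i w⟫)` with `s = ‖z‖²`.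
For `‖z‖²` this is the flat form `⟪i v, w⟫`; for `-log (1 - ‖z‖²)` one has
`φ' = c := (1 - s)⁻¹` and `φ'' = c²`. The differential of `f` is a rescaling plus a rank-one
term along `z`, `Df(z) v = a v + a c ⟪z, v⟫ z` with `a = c^(1/2)`, and since `⟪i z, z⟫ = 0`
the flat form pulls back to `a² ⟪i v, w⟫ + a² c (⟪z, i v⟫ ⟪z, w⟫ - ⟪z, v⟫ ⟪z, i w⟫)`,
which is the hyperbolic form.
-/

open Filter Topology InnerProductSpace Complex

/-- The Kähler 2-form `(i/2)∂∂̄Φ` associated to a potential `Φ`, evaluated at the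
point `z` on tangent vectors `v, w`:
`ω_Φ(z)(v,w) = (1/4)(D²Φ(z)(Jv, w) - D²Φ(z)(v, Jw))` where `J` is multiplication by `i`. -/
noncomputable def kform (n : ℕ) (Φ : EuclideanSpace ℂ (Fin n) → ℝ)
    (z v w : EuclideanSpace ℂ (Fin n)) : ℝ :=
  (1 / 4) * (fderiv ℝ (fderiv ℝ Φ) z (Complex.I • v) w
    - fderiv ℝ (fderiv ℝ Φ) z v (Complex.I • w))

section RadialPotential

variable {F : Type*} [NormedAddCommGroup F] [InnerProductSpace ℝ F]

theorem HasDerivAt.hasFDerivAt_comp_norm_sq {φ : ℝ → ℝ} {d : ℝ} {y : F}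
    (hφ : HasDerivAt φ d (‖y‖ ^ 2)) :
    HasFDerivAt (fun x => φ (‖x‖ ^ 2)) ((2 * d) • innerSL ℝ y) y := by
  refine (hφ.comp_hasFDerivAt y (hasStrictFDerivAt_norm_sq y).hasFDerivAt).congr_fderiv ?_
  rw [two_nsmul, ← two_smul ℝ, smul_smul, mul_comm]

theorem fderiv_fderiv_comp_norm_sq_apply {φ φ' : ℝ → ℝ} {φ'' : ℝ} {z : F}
    (hφ : ∀ᶠ t in 𝓝 (‖z‖ ^ 2), HasDerivAt φ (φ' t) t) (hφ' : HasDerivAt φ' φ'' (‖z‖ ^ 2))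
    (u w : F) :
    fderiv ℝ (fderiv ℝ fun x => φ (‖x‖ ^ 2)) z u w
      = 2 * φ' (‖z‖ ^ 2) * ⟪u, w⟫_ℝ + 4 * φ'' * (⟪z, u⟫_ℝ * ⟪z, w⟫_ℝ) := by
  have hfderiv : fderiv ℝ (fun x => φ (‖x‖ ^ 2)) =ᶠ[𝓝 z]
      fun y => (2 * φ' (‖y‖ ^ 2)) • innerSL ℝ y := by
    filter_upwards [(continuous_norm.pow 2).continuousAt.eventually hφ] with y hy
    exact hy.hasFDerivAt_comp_norm_sq.fderiv
  have hcoeff := hφ'.hasFDerivAt_comp_norm_sq.const_mul 2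
  have hsecond : HasFDerivAt (fun y => (2 * φ' (‖y‖ ^ 2)) • innerSL ℝ y) _ z :=
    hcoeff.smul (innerSL ℝ (E := F)).hasFDerivAt
  rw [hfderiv.fderiv_eq, hsecond.fderiv]
  simp only [add_apply, smul_apply, ContinuousLinearMap.smulRight_apply, coe_innerSL_apply,
    smul_eq_mul]
  -- `innerSL ℝ` was differentiated as an `ℝ`-linear map; `erw` sees through `starRingEnd ℝ = id`
  erw [coe_innerSL_apply]
  ring

theorem hasFDerivAt_inv_sqrt_one_sub_norm_sq_smul {z : F} (hz : ‖z‖ < 1) :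
    HasFDerivAt (fun y : F => (√(1 - ‖y‖ ^ 2))⁻¹ • y)
      ((√(1 - ‖z‖ ^ 2))⁻¹ • ContinuousLinearMap.id ℝ F
        + (((√(1 - ‖z‖ ^ 2))⁻¹ * (1 - ‖z‖ ^ 2)⁻¹) • innerSL ℝ z).smulRight z) z := by
  have hs : 0 < 1 - ‖z‖ ^ 2 := by nlinarith [norm_nonneg z]
  have hcoeff : HasDerivAt (fun t => (√(1 - t))⁻¹) _ (‖z‖ ^ 2) :=
    (((hasDerivAt_id' (‖z‖ ^ 2)).const_sub 1).sqrt hs.ne').inv (Real.sqrt_pos.2 hs).ne'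
  refine (hcoeff.hasFDerivAt_comp_norm_sq.smul (hasFDerivAt_id z)).congr_fderiv ?_
  ext u
  simp only [id_eq, add_apply, smul_apply, ContinuousLinearMap.id_apply,
    ContinuousLinearMap.smulRight_apply, coe_innerSL_apply, smul_eq_mul, add_right_inj]
  rw [Real.sq_sqrt hs.le]
  congr 2
  field_simp

end RadialPotential

section ComplexEuclidean

variable {n : ℕ}

theorem EuclideanSpace.real_inner_eq_re_inner (x y : EuclideanSpace ℂ (Fin n)) :
    ⟪x, y⟫_ℝ = (⟪x, y⟫_ℂ).re := by
  simp [PiLp.inner_apply, Complex.re_sum]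

theorem EuclideanSpace.real_inner_I_smul_right (u v : EuclideanSpace ℂ (Fin n)) :
    ⟪u, I • v⟫_ℝ = -⟪I • u, v⟫_ℝ := by
  simp [EuclideanSpace.real_inner_eq_re_inner]

theorem EuclideanSpace.real_inner_I_smul_self (z : EuclideanSpace ℂ (Fin n)) :
    ⟪I • z, z⟫_ℝ = 0 := by
  have := EuclideanSpace.real_inner_I_smul_right z z
  rw [real_inner_comm] at this
  linarith

theorem kform_comp_norm_sq {φ φ' : ℝ → ℝ} {φ'' : ℝ} {z : EuclideanSpace ℂ (Fin n)}
    (hφ : ∀ᶠ t in 𝓝 (‖z‖ ^ 2), HasDerivAt φ (φ' t) t) (hφ' : HasDerivAt φ' φ'' (‖z‖ ^ 2))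
    (v w : EuclideanSpace ℂ (Fin n)) :
    kform n (fun y => φ (‖y‖ ^ 2)) z v w
      = φ' (‖z‖ ^ 2) * ⟪I • v, w⟫_ℝ
        + φ'' * (⟪z, I • v⟫_ℝ * ⟪z, w⟫_ℝ - ⟪z, v⟫_ℝ * ⟪z, I • w⟫_ℝ) := by
  rw [kform, fderiv_fderiv_comp_norm_sq_apply hφ hφ', fderiv_fderiv_comp_norm_sq_apply hφ hφ',
    EuclideanSpace.real_inner_I_smul_right v w]
  ring

theorem kform_norm_sq (z v w : EuclideanSpace ℂ (Fin n)) :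
    kform n (fun y => ‖y‖ ^ 2) z v w = ⟪I • v, w⟫_ℝ := by
  simpa using kform_comp_norm_sq (φ := id) (φ' := fun _ => 1) (φ'' := 0)
    (.of_forall fun t => hasDerivAt_id t) (hasDerivAt_const _ _) v w

theorem kform_neg_log_one_sub_norm_sq {z : EuclideanSpace ℂ (Fin n)} (hz : ‖z‖ < 1)
    (v w : EuclideanSpace ℂ (Fin n)) :
    kform n (fun y => -Real.log (1 - ‖y‖ ^ 2)) z v w
      = (1 - ‖z‖ ^ 2)⁻¹ * ⟪I • v, w⟫_ℝ
        + (1 - ‖z‖ ^ 2)⁻¹ ^ 2 * (⟪z, I • v⟫_ℝ * ⟪z, w⟫_ℝ - ⟪z, v⟫_ℝ * ⟪z, I • w⟫_ℝ) := by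
  have hs : ‖z‖ ^ 2 < 1 := by nlinarith [norm_nonneg z]
  refine kform_comp_norm_sq (φ := fun t => -Real.log (1 - t)) (φ' := fun t => (1 - t)⁻¹) ?_ ?_ v w
  · filter_upwards [gt_mem_nhds hs] with t ht
    refine (((hasDerivAt_id' t).const_sub 1).log (sub_ne_zero.2 ht.ne')).neg.congr_deriv ?_
    field_simp
  · refine (((hasDerivAt_id' _).const_sub 1).inv (sub_ne_zero.2 hs.ne')).congr_deriv ?_
    field_simp

theorem EuclideanSpace.real_inner_I_smul_smul_add_smul (z v w : EuclideanSpace ℂ (Fin n))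
    (a b : ℝ) :
    ⟪I • (a • v + (b * ⟪z, v⟫_ℝ) • z), a • w + (b * ⟪z, w⟫_ℝ) • z⟫_ℝ
      = a ^ 2 * ⟪I • v, w⟫_ℝ + a * b * (⟪z, I • v⟫_ℝ * ⟪z, w⟫_ℝ - ⟪z, v⟫_ℝ * ⟪z, I • w⟫_ℝ) := by
  simp only [smul_add, smul_comm I, inner_add_left, inner_add_right, real_inner_smul_left,
    real_inner_smul_right, EuclideanSpace.real_inner_I_smul_self, real_inner_comm (I • v) z,
    EuclideanSpace.real_inner_I_smul_right z w]
  ring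

end ComplexEuclidean

/-- The map `f : ℂHⁿ → ℂⁿ`, `f z = z / √(1 - ‖z‖²)`, satisfies `f^*(ω₀) = ω_hyp`,
where `ω₀` has potential `‖w‖²` and `ω_hyp` has potential `-log(1 - ‖z‖²)`. -/
theorem stmt_1 (n : ℕ)
    (f : EuclideanSpace ℂ (Fin n) → EuclideanSpace ℂ (Fin n))
    (hf : ∀ z, f z = (Real.sqrt (1 - ‖z‖ ^ 2))⁻¹ • z) :
    ∀ z : EuclideanSpace ℂ (Fin n), ‖z‖ < 1 → ∀ v w,
      kform n (fun y => ‖y‖ ^ 2) (f z) (fderiv ℝ f z v) (fderiv ℝ f z w)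
        = kform n (fun y => -Real.log (1 - ‖y‖ ^ 2)) z v w := by
  intro z hz v w
  obtain rfl : f = fun y => (√(1 - ‖y‖ ^ 2))⁻¹ • y := funext hf
  have hs : 0 ≤ 1 - ‖z‖ ^ 2 := by nlinarith [norm_nonneg z]
  rw [kform_norm_sq, kform_neg_log_one_sub_norm_sq hz,
    (hasFDerivAt_inv_sqrt_one_sub_norm_sq_smul hz).fderiv]
  simp only [add_apply, smul_apply, ContinuousLinearMap.id_apply,
    ContinuousLinearMap.smulRight_apply, coe_innerSL_apply, smul_eq_mul]
  have ha : (√(1 - ‖z‖ ^ 2))⁻¹ ^ 2 = (1 - ‖z‖ ^ 2)⁻¹ := by rw [inv_pow, Real.sq_sqrt hs]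
  rw [EuclideanSpace.real_inner_I_smul_smul_add_smul]
  linear_combination (⟪I • v, w⟫_ℝ
    + (1 - ‖z‖ ^ 2)⁻¹ * (⟪z, I • v⟫_ℝ * ⟪z, w⟫_ℝ - ⟪z, v⟫_ℝ * ⟪z, I • w⟫_ℝ)) * ha
end

section
/- Let M ⊆ C^n be a domain with a rotation invariant Kähler form ω_Φ = (i/2)∂∂̄Φ, where Φ(z) = Φ̃(|z_1|^2,…,|z_n|^2). If ∂Φ̃/∂x_k ≥ 0 on M̃ for all k = 1,…,n, then the map Ψ_0 : M → C^n with components Ψ_0,k(z) = sqrt(∂Φ̃/∂x_k(|z_1|^2,…,|z_n|^2)) · z_k satisfies Ψ_0^*(ω_0) = ω_Φ as an identity of 2-forms on M. -/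
noncomputable def pjA (n : ℕ) (j : Fin n) : EuclideanSpace ℂ (Fin n) →L[ℝ] ℂ :=
  (EuclideanSpace.proj j : EuclideanSpace ℂ (Fin n) →L[ℂ] ℂ).restrictScalars ℝ

lemma pjA_apply {n : ℕ} (j : Fin n) (z : EuclideanSpace ℂ (Fin n)) : pjA n j z = z j := rfl

noncomputable def cfA (a : ℂ) : ℂ →L[ℝ] ℝ :=
  (2 * a.re) • Complex.reCLM + (2 * a.im) • Complex.imCLM

lemma cfA_apply (a w : ℂ) : cfA a w = 2 * a.re * w.re + 2 * a.im * w.im := by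
  simp [cfA]

noncomputable def BA (n : ℕ) (z : EuclideanSpace ℂ (Fin n)) :
    EuclideanSpace ℂ (Fin n) →L[ℝ] (Fin n → ℝ) :=
  ContinuousLinearMap.pi (fun j => (cfA (z j)).comp (pjA n j))

lemma BA_apply {n : ℕ} (z v : EuclideanSpace ℂ (Fin n)) (j : Fin n) :
    BA n z v j = 2 * (z j).re * (v j).re + 2 * (z j).im * (v j).im := by
  simp [BA, cfA_apply, pjA_apply]

lemma hasFDerivAt_nsq (a : ℂ) : HasFDerivAt (fun c : ℂ => ‖c‖ ^ 2) (cfA a) a := by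
  have h : (fun c : ℂ => ‖c‖ ^ 2) = fun c : ℂ => c.re * c.re + c.im * c.im := by
    funext c
    rw [Complex.sq_norm, Complex.normSq_apply]
  rw [h]
  have h1 := (Complex.reCLM.hasFDerivAt (x := a)).mul (Complex.reCLM.hasFDerivAt (x := a))
  have h2 := (Complex.imCLM.hasFDerivAt (x := a)).mul (Complex.imCLM.hasFDerivAt (x := a))
  have h3 := h1.add h2
  refine h3.congr_fderiv (Eq.symm ?_)
  ext w
  simp [cfA_apply]
  ring

lemma hasFDerivAt_qA {n : ℕ} (z : EuclideanSpace ℂ (Fin n)) :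
    HasFDerivAt (fun z' : EuclideanSpace ℂ (Fin n) => fun j => ‖z' j‖ ^ 2) (BA n z) z := by
  apply hasFDerivAt_pi.2
  intro j
  exact (hasFDerivAt_nsq (z j)).comp z ((pjA n j).hasFDerivAt)

noncomputable def LBA (n : ℕ) :
    EuclideanSpace ℂ (Fin n) →L[ℝ] (EuclideanSpace ℂ (Fin n) →L[ℝ] (Fin n → ℝ)) :=
  LinearMap.toContinuousLinearMap
    { toFun := BA n
      map_add' := by
        intro x y; ext v j
        simp [BA_apply]; ring
      map_smul' := by
        intro r x; ext v j
        simp [BA_apply, Complex.real_smul]; ring }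

lemma LBA_apply {n : ℕ} (z : EuclideanSpace ℂ (Fin n)) : LBA n z = BA n z := by
  simp [LBA]

noncomputable def SFA (n : ℕ) : (Fin n → ℝ) →L[ℝ] ℝ := ∑ j, ContinuousLinearMap.proj j

lemma SFA_apply {n : ℕ} (x : Fin n → ℝ) : SFA n x = ∑ j, x j := by simp [SFA]

lemma hasFDerivAt_normsq {n : ℕ} (z : EuclideanSpace ℂ (Fin n)) :
    HasFDerivAt (fun y : EuclideanSpace ℂ (Fin n) => ‖y‖ ^ 2) ((SFA n).comp (BA n z)) z := by
  have h : (fun y : EuclideanSpace ℂ (Fin n) => ‖y‖ ^ 2)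
      = fun y : EuclideanSpace ℂ (Fin n) => SFA n (fun j => ‖y j‖ ^ 2) := by
    funext y
    rw [SFA_apply, EuclideanSpace.norm_eq, Real.sq_sqrt]
    positivity
  rw [h]
  exact (SFA n).hasFDerivAt.comp z (hasFDerivAt_qA z)

lemma fderiv_fderiv_normsq {n : ℕ} (z : EuclideanSpace ℂ (Fin n))
    (a b : EuclideanSpace ℂ (Fin n)) :
    fderiv ℝ (fderiv ℝ (fun y : EuclideanSpace ℂ (Fin n) => ‖y‖ ^ 2)) z a b
      = SFA n (BA n a b) := by
  have h1 : fderiv ℝ (fun y : EuclideanSpace ℂ (Fin n) => ‖y‖ ^ 2)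
      = fun z' => (SFA n).comp (BA n z') := funext fun z' => (hasFDerivAt_normsq z').fderiv
  have h2 : (fun z' : EuclideanSpace ℂ (Fin n) => (SFA n).comp (BA n z'))
      = ⇑((ContinuousLinearMap.compL ℝ (EuclideanSpace ℂ (Fin n)) (Fin n → ℝ) ℝ (SFA n)).comp (LBA n)) := by
    funext z'
    simp [LBA_apply]
  rw [h1, h2, ContinuousLinearMap.fderiv]
  simp [LBA_apply]

lemma kform_normsq {n : ℕ} (z v w : EuclideanSpace ℂ (Fin n)) :
    kform n (fun y => ‖y‖ ^ 2) z v w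
      = ∑ j, ((v j).re * (w j).im - (v j).im * (w j).re) := by
  rw [kform, fderiv_fderiv_normsq, fderiv_fderiv_normsq, SFA_apply, SFA_apply]
  rw [← Finset.sum_sub_distrib, Finset.mul_sum]
  apply Finset.sum_congr rfl
  intro j _
  have hIv : (Complex.I • v) j = Complex.I * v j := rfl
  have hIw : (Complex.I • w) j = Complex.I * w j := rfl
  rw [BA_apply, BA_apply, hIv, hIw]
  simp [Complex.mul_re, Complex.mul_im]
  ring


lemma coord_le {n : ℕ} (y : EuclideanSpace ℂ (Fin n)) (k : Fin n) : ‖y k‖ ≤ ‖y‖ := by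
  rw [EuclideanSpace.norm_eq]
  have h2 : ‖y k‖ ^ 2 ≤ ∑ j, ‖y j‖ ^ 2 :=
    Finset.single_le_sum (f := fun j => ‖y j‖ ^ 2) (fun j _ => by positivity) (Finset.mem_univ k)
  nlinarith [Real.sq_sqrt (show (0:ℝ) ≤ ∑ j, ‖y j‖ ^ 2 by positivity),
    Real.sqrt_nonneg (∑ j, ‖y j‖ ^ 2), norm_nonneg (y k)]

set_option maxHeartbeats 1000000 in
/-- Rotation invariant Kähler domain `(M, ω_Φ)`, `Φ(z) = Φ̃(|z₁|²,…,|zₙ|²)`, with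
`∂Φ̃/∂x_k ≥ 0`: the special map `Ψ₀(z)_k = √(∂Φ̃/∂x_k) · z_k` satisfies
`Ψ₀^*(ω₀) = ω_Φ` as an identity of 2-forms on `M`. -/
theorem stmt_3 (n : ℕ) (M : Set (EuclideanSpace ℂ (Fin n))) (hM : IsOpen M)
    (U : Set (Fin n → ℝ)) (hU : IsOpen U)
    (Φt : (Fin n → ℝ) → ℝ) (hΦt : ContDiffOn ℝ (⊤ : ℕ∞) Φt U)
    (hMU : ∀ z ∈ M, (fun j => ‖z j‖ ^ 2) ∈ U)
    (Φ : EuclideanSpace ℂ (Fin n) → ℝ)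
    (hΦ : ∀ z, Φ z = Φt (fun j => ‖z j‖ ^ 2))
    (hkahler : ∀ z ∈ M, ∀ v : EuclideanSpace ℂ (Fin n), v ≠ 0 →
      0 < kform n Φ z v (Complex.I • v))
    (hpos : ∀ z ∈ M, ∀ k, 0 ≤ fderiv ℝ Φt (fun j => ‖z j‖ ^ 2) (Pi.single k 1))
    (Ψ : EuclideanSpace ℂ (Fin n) → EuclideanSpace ℂ (Fin n))
    (hΨ : ∀ z, ∀ k, Ψ z k =
      (Real.sqrt (fderiv ℝ Φt (fun j => ‖z j‖ ^ 2) (Pi.single k 1)) : ℂ) * z k) :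
    ∀ z ∈ M, ∀ v w,
      kform n (fun y => ‖y‖ ^ 2) (Ψ z) (fderiv ℝ Ψ z v) (fderiv ℝ Ψ z w)
        = kform n Φ z v w := by

  intro z hz v w
  have hx₀U : (fun j => ‖z j‖ ^ 2) ∈ U := hMU z hz
  -- smoothness facts about Φt
  have hΦtAt : ∀ y ∈ U, ContDiffAt ℝ (⊤ : ℕ∞) Φt y := fun y hy => (hΦt.contDiffAt (hU.mem_nhds hy))
  have hdΦt : ∀ y ∈ U, HasFDerivAt Φt (fderiv ℝ Φt y) y := fun y hy =>
    ((hΦtAt y hy).differentiableAt (by simp)).hasFDerivAt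
  set G : (Fin n → ℝ) →L[ℝ] ℝ := fderiv ℝ Φt (fun j => ‖z j‖ ^ 2) with hG
  set H2 : (Fin n → ℝ) →L[ℝ] (Fin n → ℝ) →L[ℝ] ℝ :=
    fderiv ℝ (fderiv ℝ Φt) (fun j => ‖z j‖ ^ 2) with hH2def
  have hH2 : HasFDerivAt (fderiv ℝ Φt) H2 (fun j => ‖z j‖ ^ 2) := by
    have h1 : ContDiffAt ℝ 1 (fderiv ℝ Φt) (fun j => ‖z j‖ ^ 2) :=
      (hΦtAt _ hx₀U).fderiv_right (WithTop.coe_le_coe.2 le_top)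
    exact (h1.differentiableAt one_ne_zero).hasFDerivAt
  -- q is continuous, S is open
  have hqcont : Continuous (fun z' : EuclideanSpace ℂ (Fin n) => fun j => ‖z' j‖ ^ 2) :=
    continuous_iff_continuousAt.2 fun z' => (hasFDerivAt_qA z').continuousAt
  have hS : IsOpen ((fun z' : EuclideanSpace ℂ (Fin n) => fun j => ‖z' j‖ ^ 2) ⁻¹' U) :=
    hU.preimage hqcont
  have hzS : z ∈ (fun z' : EuclideanSpace ℂ (Fin n) => fun j => ‖z' j‖ ^ 2) ⁻¹' U := hx₀U
  -- first derivative of Φ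
  have hΦq : ∀ z' ∈ (fun z'' : EuclideanSpace ℂ (Fin n) => fun j => ‖z'' j‖ ^ 2) ⁻¹' U,
      HasFDerivAt Φ ((fderiv ℝ Φt (fun j => ‖z' j‖ ^ 2)).comp (BA n z')) z' := by
    intro z' hz'
    have hfun : Φ = fun z'' => Φt (fun j => ‖z'' j‖ ^ 2) := funext hΦ
    rw [hfun]
    exact (hdΦt _ hz').comp z' (hasFDerivAt_qA z')
  have hev : (fderiv ℝ Φ) =ᶠ[nhds z]
      (fun z' => (fderiv ℝ Φt (fun j => ‖z' j‖ ^ 2)).comp (BA n z')) := by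
    filter_upwards [hS.mem_nhds hzS] with y hy using (hΦq y hy).fderiv
  have hD1 : HasFDerivAt (fun z' : EuclideanSpace ℂ (Fin n) =>
      fderiv ℝ Φt (fun j => ‖z' j‖ ^ 2)) (H2.comp (BA n z)) z :=
    hH2.comp z (hasFDerivAt_qA z)
  have hD2 : HasFDerivAt (fun z' : EuclideanSpace ℂ (Fin n) => BA n z') (LBA n) z := by
    have h := (LBA n).hasFDerivAt (x := z)
    have : (fun z' : EuclideanSpace ℂ (Fin n) => BA n z') = ⇑(LBA n) := by
      funext z'; rw [LBA_apply]
    rwa [this]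
  have hDD := (hD1.clm_comp hD2).congr_of_eventuallyEq hev
  have kRHS : ∀ a b, fderiv ℝ (fderiv ℝ Φ) z a b
      = G (BA n a b) + H2 (BA n z a) (BA n z b) := by
    intro a b
    rw [hDD.fderiv]
    simp only [ContinuousLinearMap.add_apply, ContinuousLinearMap.coe_comp', Function.comp_apply,
      ContinuousLinearMap.compL_apply, ContinuousLinearMap.flip_apply]
    rw [LBA_apply]
  have hkΦ : kform n Φ z v w = (1/4) *
      ((G (BA n (Complex.I • v) w) + H2 (BA n z (Complex.I • v)) (BA n z w))
      - (G (BA n v (Complex.I • w)) + H2 (BA n z v) (BA n z (Complex.I • w)))) := by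
    rw [kform, kRHS, kRHS]
  have hsymm : ∀ a b, H2 a b = H2 b a := by
    intro a b
    refine second_derivative_symmetric_of_eventually (f := Φt) ?_ hH2 a b
    filter_upwards [hU.mem_nhds hx₀U] with y hy using hdΦt y hy
  -- derivative of the partial-derivative functions
  have hgk : ∀ k, HasFDerivAt
      (fun z' : EuclideanSpace ℂ (Fin n) => fderiv ℝ Φt (fun j => ‖z' j‖ ^ 2) (Pi.single k 1))
      ((ContinuousLinearMap.apply ℝ ℝ (Pi.single k 1)).comp (H2.comp (BA n z))) z := by
    intro k
    exact ((ContinuousLinearMap.apply ℝ ℝ (Pi.single k 1)).hasFDerivAt).comp z hD1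
  -- degenerate coordinates vanish
  have hzk0 : ∀ k, G (Pi.single k 1) = 0 → z k = 0 := by
    intro k hk
    by_contra hne
    set v₀ : EuclideanSpace ℂ (Fin n) := EuclideanSpace.single k (z k) with hv₀def
    have hv₀k : v₀ k = z k := by simp [hv₀def, EuclideanSpace.single_apply]
    have hv₀j : ∀ j, j ≠ k → v₀ j = 0 := by
      intro j hj; simp [hv₀def, EuclideanSpace.single_apply, hj]
    have hv₀ : v₀ ≠ 0 := by
      intro h
      apply hne
      rw [← hv₀k, h]
      rfl
    set t : ℝ := Complex.normSq (z k) with ht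
    have htpos : 0 < t := Complex.normSq_pos.2 hne
    have hBzv₀ : BA n z v₀ = ((2 * t) • (Pi.single k (1:ℝ) : Fin n → ℝ) : Fin n → ℝ) := by
      funext j
      by_cases hj : j = k
      · subst hj
        simp [BA_apply, hv₀k, ht, Complex.normSq_apply, Pi.single_apply]
        ring
      · simp [BA_apply, hv₀j j hj, Pi.single_apply, hj]
    have hBv₀v₀ : BA n v₀ v₀ = ((2 * t) • (Pi.single k (1:ℝ) : Fin n → ℝ) : Fin n → ℝ) := by
      funext j
      by_cases hj : j = k
      · subst hj
        simp [BA_apply, hv₀k, ht, Complex.normSq_apply, Pi.single_apply]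
        ring
      · simp [BA_apply, hv₀j j hj, Pi.single_apply, hj]
    have hIapp : ∀ j, (Complex.I • v₀) j = Complex.I * v₀ j := fun j => rfl
    have hBIvIv : BA n (Complex.I • v₀) (Complex.I • v₀) = ((2 * t) • (Pi.single k (1:ℝ) : Fin n → ℝ) : Fin n → ℝ) := by
      funext j
      by_cases hj : j = k
      · subst hj
        simp [BA_apply, hIapp, hv₀k, ht, Complex.normSq_apply, Complex.mul_re, Complex.mul_im,
          Pi.single_apply]
        ring
      · simp [BA_apply, hIapp, hv₀j j hj, Pi.single_apply, hj]
    have hBzIv : BA n z (Complex.I • v₀) = 0 := by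
      funext j
      by_cases hj : j = k
      · subst hj
        simp [BA_apply, hIapp, hv₀k, Complex.mul_re, Complex.mul_im]
        ring
      · simp [BA_apply, hIapp, hv₀j j hj]
    -- local minimum of the partial derivative
    have hmin : IsLocalMin
        (fun z' : EuclideanSpace ℂ (Fin n) => fderiv ℝ Φt (fun j => ‖z' j‖ ^ 2) (Pi.single k 1))
        z := by
      show ∀ᶠ z' in nhds z, _ ≤ _
      filter_upwards [hM.mem_nhds hz] with y hy
      have h1 : fderiv ℝ Φt (fun j => ‖z j‖ ^ 2) (Pi.single k 1) = 0 := hk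
      rw [h1]
      exact hpos y hy k
    have hgk0 : ((ContinuousLinearMap.apply ℝ ℝ (Pi.single k 1)).comp (H2.comp (BA n z))) = 0 := by
      rw [← (hgk k).fderiv]
      exact hmin.fderiv_eq_zero
    have hH2kk : H2 (Pi.single k 1) (Pi.single k 1) = 0 := by
      have h1 : H2 (BA n z v₀) (Pi.single k 1) = 0 := by
        have := congrArg (fun (L : EuclideanSpace ℂ (Fin n) →L[ℝ] ℝ) => L v₀) hgk0
        simpa using this
      rw [hBzv₀] at h1
      simp only [map_smul, ContinuousLinearMap.smul_apply, smul_eq_mul] at h1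
      rcases mul_eq_zero.1 h1 with h | h
      · exact absurd h (by positivity)
      · exact h
    have hII : Complex.I • (Complex.I • v₀) = -v₀ := by
      rw [smul_smul, Complex.I_mul_I, neg_one_smul]
    have h0 : kform n Φ z v₀ (Complex.I • v₀) = 0 := by
      rw [kform, kRHS, kRHS, hII, map_neg, map_neg, hBIvIv, hBzIv, hBzv₀, hBv₀v₀]
      simp only [map_smul, map_neg, map_zero, smul_eq_mul, ContinuousLinearMap.smul_apply,
        ContinuousLinearMap.zero_apply, ContinuousLinearMap.neg_apply, hBzv₀, hk, hH2kk]
      ring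
    have := hkahler z hz v₀ hv₀
    rw [h0] at this
    exact lt_irrefl 0 this
  -- the derivative of Ψ
  set sk : Fin n → ℝ := fun k => Real.sqrt (G (Pi.single k 1)) with hskdef
  set rk : Fin n → ℝ := fun k => if 0 < G (Pi.single k 1) then 1 / (2 * sk k) else 0 with hrkdef
  set gkL : Fin n → (EuclideanSpace ℂ (Fin n) →L[ℝ] ℝ) := fun k =>
    (ContinuousLinearMap.apply ℝ ℝ (Pi.single k 1)).comp (H2.comp (BA n z)) with hgkLdef
  set DΨc : Fin n → (EuclideanSpace ℂ (Fin n) →L[ℝ] ℂ) := fun k =>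
    (sk k) • pjA n k + ((rk k) • gkL k).smulRight (z k) with hDΨcdef
  have hcomp : ∀ k, HasFDerivAt (fun z' => Ψ z' k) (DΨc k) z := by
    intro k
    have hΨk : (fun z' => Ψ z' k) = fun z' =>
        ((Real.sqrt (fderiv ℝ Φt (fun j => ‖z' j‖ ^ 2) (Pi.single k 1)) : ℝ) : ℂ) * z' k :=
      funext fun z' => hΨ z' k
    rw [hΨk]
    rcases (hpos z hz k).lt_or_eq with hpk | hpk
    · -- positive case
      have hne : G (Pi.single k 1) ≠ 0 := ne_of_gt hpk
      have hs : HasFDerivAt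
          (fun z' : EuclideanSpace ℂ (Fin n) =>
            Real.sqrt (fderiv ℝ Φt (fun j => ‖z' j‖ ^ 2) (Pi.single k 1)))
          ((1 / (2 * sk k)) • gkL k) z :=
        (Real.hasDerivAt_sqrt hne).comp_hasFDerivAt z (hgk k)
      have hsC : HasFDerivAt
          (fun z' : EuclideanSpace ℂ (Fin n) =>
            ((Real.sqrt (fderiv ℝ Φt (fun j => ‖z' j‖ ^ 2) (Pi.single k 1)) : ℝ) : ℂ))
          (Complex.ofRealCLM.comp ((1 / (2 * sk k)) • gkL k)) z :=
        Complex.ofRealCLM.hasFDerivAt.comp z hs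
      have hzkd : HasFDerivAt (fun z' : EuclideanSpace ℂ (Fin n) => z' k) (pjA n k) z :=
        (pjA n k).hasFDerivAt
      have hmul := hsC.mul hzkd
      refine hmul.congr_fderiv (Eq.symm ?_)
      ext a
      simp only [hDΨcdef, ContinuousLinearMap.add_apply, ContinuousLinearMap.smul_apply,
        ContinuousLinearMap.smulRight_apply, ContinuousLinearMap.coe_comp', Function.comp_apply,
        Complex.ofRealCLM_apply, pjA_apply, hrkdef, if_pos hpk, smul_eq_mul]
      simp only [hskdef]
      rw [hG]
      simp only [Complex.real_smul]
      rw [if_pos hpk]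
      push_cast
      ring
    · -- degenerate case
      have hGk0 : G (Pi.single k 1) = 0 := hpk.symm
      have hzk : z k = 0 := hzk0 k hGk0
      have hDc0 : DΨc k = 0 := by
        ext a
        simp [hDΨcdef, hzk, hskdef, hGk0, hrkdef]
      rw [hDc0]
      rw [hasFDerivAt_iff_isLittleO_nhds_zero]
      have hval : Real.sqrt (fderiv ℝ Φt (fun j => ‖z j‖ ^ 2) (Pi.single k 1)) = 0 := by
        rw [show fderiv ℝ Φt (fun j => ‖z j‖ ^ 2) (Pi.single k 1) = G (Pi.single k 1) from rfl,
          hGk0, Real.sqrt_zero]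
      rw [Asymptotics.isLittleO_iff]
      intro c hc
      have htend : Filter.Tendsto
          (fun h : EuclideanSpace ℂ (Fin n) =>
            Real.sqrt (fderiv ℝ Φt (fun j => ‖(z + h) j‖ ^ 2) (Pi.single k 1)))
          (nhds 0) (nhds 0) := by
        have h1 : ContinuousAt (fun h : EuclideanSpace ℂ (Fin n) => z + h) 0 :=
          (continuous_add_left z).continuousAt
        have h2 : ContinuousAt
            (fun z' : EuclideanSpace ℂ (Fin n) =>
              Real.sqrt (fderiv ℝ Φt (fun j => ‖z' j‖ ^ 2) (Pi.single k 1))) (z + 0) := by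
          rw [add_zero]
          exact (Real.continuous_sqrt.continuousAt).comp (hgk k).continuousAt
        have h3 := (h2.comp h1).tendsto
        have h4 : (fun h : EuclideanSpace ℂ (Fin n) =>
            Real.sqrt (fderiv ℝ Φt (fun j => ‖(z + h) j‖ ^ 2) (Pi.single k 1)))
            = (fun z' : EuclideanSpace ℂ (Fin n) =>
              Real.sqrt (fderiv ℝ Φt (fun j => ‖z' j‖ ^ 2) (Pi.single k 1)))
              ∘ (fun h : EuclideanSpace ℂ (Fin n) => z + h) := rfl
        rw [h4]
        convert h3 using 2
        simp [hval]
      filter_upwards [htend.eventually_lt_const hc] with h hlt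
      have h0 : ((0 : EuclideanSpace ℂ (Fin n) →L[ℝ] ℂ)) h = 0 := rfl
      rw [h0]
      have hzh : (z + h) k = h k := by
        have : (z + h) k = z k + h k := rfl
        rw [this, hzk, zero_add]
      rw [hval]
      simp only [Complex.ofReal_zero, zero_mul, sub_zero, hzh]
      have hb1 : ‖(Real.sqrt (fderiv ℝ Φt (fun j => ‖(z + h) j‖ ^ 2) (Pi.single k 1)) : ℂ) * h k‖
          ≤ c * ‖h‖ := by
        rw [norm_mul, Complex.norm_real, Real.norm_eq_abs,
          abs_of_nonneg (Real.sqrt_nonneg _)]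
        have := coord_le h k
        have hs0 := Real.sqrt_nonneg (fderiv ℝ Φt (fun j => ‖(z + h) j‖ ^ 2) (Pi.single k 1))
        nlinarith [norm_nonneg (h k), norm_nonneg h]
      simpa using hb1
  have hcompPi : HasFDerivAt (fun z' => (fun k => Ψ z' k)) (ContinuousLinearMap.pi DΨc) z :=
    hasFDerivAt_pi.2 hcomp
  set DΨ : EuclideanSpace ℂ (Fin n) →L[ℝ] EuclideanSpace ℂ (Fin n) :=
    ((PiLp.continuousLinearEquiv 2 ℝ (fun _ : Fin n => ℂ)).symm.toContinuousLinearMap).comp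
      (ContinuousLinearMap.pi DΨc) with hDΨdef
  have hΨd : HasFDerivAt Ψ DΨ z :=
    ((PiLp.continuousLinearEquiv 2 ℝ
      (fun _ : Fin n => ℂ)).symm.toContinuousLinearMap).hasFDerivAt.comp z hcompPi
  have hDΨa : ∀ (a : EuclideanSpace ℂ (Fin n)) k, DΨ a k
      = ((sk k : ℝ) : ℂ) * a k + (((rk k * H2 (BA n z a) (Pi.single k 1)) : ℝ) : ℂ) * z k := by
    intro a k
    have h1 : DΨ a k = DΨc k a := rfl
    rw [h1, hDΨcdef]
    simp only [ContinuousLinearMap.add_apply, ContinuousLinearMap.smul_apply,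
      ContinuousLinearMap.smulRight_apply, pjA_apply, smul_eq_mul]
    have h2 : (gkL k) a = H2 (BA n z a) (Pi.single k 1) := rfl
    rw [h2, Complex.real_smul, Complex.real_smul]
  -- componentwise forms of the bilinear map
  have hBIvw : BA n (Complex.I • v) w
      = fun j => 2 * ((v j).re * (w j).im - (v j).im * (w j).re) := by
    funext j
    have h : (Complex.I • v) j = Complex.I * v j := rfl
    simp [BA_apply, h, Complex.mul_re, Complex.mul_im]
    ring
  have hBvIw : BA n v (Complex.I • w)
      = fun j => -(2 * ((v j).re * (w j).im - (v j).im * (w j).re)) := by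
    funext j
    have h : (Complex.I • w) j = Complex.I * w j := rfl
    simp [BA_apply, h, Complex.mul_re, Complex.mul_im]
    ring
  have hBzIvL : BA n z (Complex.I • v)
      = fun j => -(2 * ((z j).re * (v j).im - (z j).im * (v j).re)) := by
    funext j
    have h : (Complex.I • v) j = Complex.I * v j := rfl
    simp [BA_apply, h, Complex.mul_re, Complex.mul_im]
    ring
  have hBzIwL : BA n z (Complex.I • w)
      = fun j => -(2 * ((z j).re * (w j).im - (z j).im * (w j).re)) := by
    funext j
    have h : (Complex.I • w) j = Complex.I * w j := rfl
    simp [BA_apply, h, Complex.mul_re, Complex.mul_im]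
    ring
  -- expansion of linear functionals as sums
  have hx_sum : ∀ x : Fin n → ℝ, x = ∑ j, x j • (Pi.single j 1 : Fin n → ℝ) := by
    intro x
    funext i
    rw [Finset.sum_apply]
    simp [Pi.single_apply]
  have hGsum : ∀ x : Fin n → ℝ, G x = ∑ j, x j * G (Pi.single j 1) := by
    intro x
    conv_lhs => rw [hx_sum x]
    rw [map_sum]
    exact Finset.sum_congr rfl fun j _ => by rw [map_smul, smul_eq_mul]
  have hH2sum : ∀ a x : Fin n → ℝ, H2 a x = ∑ j, x j * H2 a (Pi.single j 1) := by
    intro a x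
    conv_lhs => rw [hx_sum x]
    rw [map_sum]
    exact Finset.sum_congr rfl fun j _ => by rw [map_smul, smul_eq_mul]
  have hRHS : (1/4 : ℝ) *
      ((G (BA n (Complex.I • v) w) + H2 (BA n z (Complex.I • v)) (BA n z w))
      - (G (BA n v (Complex.I • w)) + H2 (BA n z v) (BA n z (Complex.I • w))))
      = ∑ j, (((v j).re * (w j).im - (v j).im * (w j).re) * G (Pi.single j 1)
          + (1/4) * ((2 * ((z j).re * (w j).im - (z j).im * (w j).re))
                      * H2 (BA n z v) (Pi.single j 1)
                   - (2 * ((z j).re * (v j).im - (z j).im * (v j).re))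
                      * H2 (BA n z w) (Pi.single j 1))) := by
    rw [hBIvw, hBvIw, hBzIvL, hBzIwL]
    rw [hsymm _ (BA n z w)]
    rw [hGsum, hGsum, hH2sum (BA n z w), hH2sum (BA n z v)]
    rw [← Finset.sum_add_distrib, ← Finset.sum_add_distrib, ← Finset.sum_sub_distrib,
      Finset.mul_sum]
    apply Finset.sum_congr rfl
    intro j _
    ring
  rw [hΨd.fderiv, kform_normsq, hkΦ, hRHS]
  apply Finset.sum_congr rfl
  intro j _
  rw [hDΨa v j, hDΨa w j]
  rcases (hpos z hz j).lt_or_eq with hpk | hpk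
  · have hpk' : 0 < G (Pi.single j 1) := hpk
    have hGle : 0 ≤ G (Pi.single j 1) := le_of_lt hpk'
    have hsq : sk j * sk j = G (Pi.single j 1) := by
      rw [hskdef]
      exact Real.mul_self_sqrt hGle
    have hskpos : 0 < sk j := by
      rw [hskdef]
      exact Real.sqrt_pos.2 hpk'
    have hskne : sk j ≠ 0 := ne_of_gt hskpos
    have hrkj : rk j = 1 / (2 * sk j) := by rw [hrkdef]; exact if_pos hpk'
    have he1 : sk j * rk j = 1 / 2 := by
      rw [hrkj]
      field_simp
    simp only [Complex.add_re, Complex.add_im, Complex.mul_re, Complex.mul_im,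
      Complex.ofReal_re, Complex.ofReal_im]
    set s := sk j
    set Hv := H2 (BA n z v) (Pi.single j 1)
    set Hw := H2 (BA n z w) (Pi.single j 1)
    set r := rk j
    linear_combination (((v j).re * (w j).im - (v j).im * (w j).re)
        - r * Hv * r * Hw * ((z j).re * (z j).im - (z j).im * (z j).re)) * hsq
      + (Hw * ((v j).re * (z j).im - (v j).im * (z j).re)
        + Hv * ((z j).re * (w j).im - (z j).im * (w j).re)) * he1
  · have hGj0 : G (Pi.single j 1) = 0 := hpk.symm
    have hzj : z j = 0 := hzk0 j hGj0
    have hs0 : sk j = 0 := by simp only [hskdef]; rw [hGj0, Real.sqrt_zero]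
    rw [hzj, hGj0, hs0]
    simp
end

section
/- Let F(x) = e^{−x} on [0,∞) and G(x_1,x_2) = (x_2 + e^{−x_1} x_1)/(e^{−x_1} − x_2), defined for x_1 ≥ 0, 0 ≤ x_2 < e^{−x_1}. Then G(x_1,x_2) → +∞ as (x_1,x_2) approaches the boundary of the region, i.e. G tends to +∞ as e^{−x_1} − x_2 → 0 with x_1 bounded, and as x_1 → +∞ uniformly in x_2 ∈ [0, e^{−x_1}). -/
/-- For `F(x) = e^{-x}`, the function `G(x₁,x₂) = (x₂ + e^{-x₁}x₁)/(e^{-x₁} - x₂)`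
tends to `+∞` at the boundary of `{x₁ ≥ 0, 0 ≤ x₂ < e^{-x₁}}`: both as
`e^{-x₁} - x₂ → 0` with `x₁` bounded, and as `x₁ → +∞` uniformly in `x₂`. -/
theorem stmt_7 (G : ℝ → ℝ → ℝ)
    (hG : ∀ x1 x2, G x1 x2 = (x2 + Real.exp (-x1) * x1) / (Real.exp (-x1) - x2)) :
    (∀ B C : ℝ, ∃ δ > (0 : ℝ), ∀ x1 x2 : ℝ, 0 ≤ x1 → x1 ≤ B → 0 ≤ x2 →
      x2 < Real.exp (-x1) → Real.exp (-x1) - x2 < δ → C ≤ G x1 x2) ∧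
    (∀ C : ℝ, ∃ T : ℝ, ∀ x1 x2 : ℝ, T ≤ x1 → 0 ≤ x2 → x2 < Real.exp (-x1) →
      C ≤ G x1 x2) := by
  constructor
  · intro B C
    set M : ℝ := max C 1 with hM
    have hM1 : (1:ℝ) ≤ M := le_max_right _ _
    have hM0 : (0:ℝ) < M := lt_of_lt_of_le one_pos hM1
    have hEB : (0:ℝ) < Real.exp (-B) := Real.exp_pos _
    refine ⟨Real.exp (-B) / (2 * M), by positivity, ?_⟩
    intro x1 x2 h0 hB h2 hlt hd
    have hdpos : 0 < Real.exp (-x1) - x2 := sub_pos.mpr hlt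
    have hEx : Real.exp (-B) ≤ Real.exp (-x1) := Real.exp_le_exp.mpr (by linarith)
    have hδle : Real.exp (-B) / (2 * M) ≤ Real.exp (-B) / 2 := by
      apply div_le_div_of_nonneg_left hEB.le (by norm_num) (by linarith)
    have hnum : Real.exp (-B) / 2 ≤ x2 + Real.exp (-x1) * x1 := by
      have : 0 ≤ Real.exp (-x1) * x1 := by positivity
      linarith
    have key : Real.exp (-B) / 2 / (Real.exp (-B) / (2 * M)) ≤
        (x2 + Real.exp (-x1) * x1) / (Real.exp (-x1) - x2) := by
      apply div_le_div₀ (by linarith) hnum hdpos hd.le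
    have hMeq : Real.exp (-B) / 2 / (Real.exp (-B) / (2 * M)) = M := by
      field_simp
    rw [hG]
    calc C ≤ M := le_max_left _ _
      _ = _ := hMeq.symm
      _ ≤ _ := key
  · intro C
    refine ⟨max C 0, ?_⟩
    intro x1 x2 hT h2 hlt
    have h0 : 0 ≤ x1 := le_trans (le_max_right _ _) hT
    have hdpos : 0 < Real.exp (-x1) - x2 := sub_pos.mpr hlt
    rw [hG]
    have hx1 : x1 ≤ (x2 + Real.exp (-x1) * x1) / (Real.exp (-x1) - x2) := by
      rw [le_div_iff₀ hdpos]
      nlinarith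
    calc C ≤ max C 0 := le_max_left _ _
      _ ≤ x1 := hT
      _ ≤ _ := hx1
end

section
/- Let c > 0 and G(x_1,x_2) = (x_2(c+x_1)^2 + c x_1)/(c(c+x_1) − x_2(c+x_1)^2), defined for x_1 ≥ 0 and 0 ≤ x_2 < c/(c+x_1). For every ε ∈ (0,1), along the curve x_1 = t, x_2 = εc/(c+t), the function G(t, εc/(c+t)) stays bounded as t → +∞ (in fact it converges to a finite limit); hence G does not tend to +∞ at the boundary of the domain. -/
open Filter Topology

/-! Along the curve `x₂ = εc/(c+x₁)` the denominator of `G` is `(1-ε)c(c+t)` and the numerator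
`c(εc + (1+ε)t)`, so `G` is a ratio of two affine functions of `t` with nonzero leading
coefficients and converges to `(1+ε)/(1-ε)`. -/

theorem tendsto_affine_div_affine_atTop (p b q d : ℝ) (hd : d ≠ 0) :
    Tendsto (fun t : ℝ => (p + b * t) / (q + d * t)) atTop (𝓝 (b / d)) := by
  have hinv : Tendsto (fun t : ℝ => t⁻¹) atTop (𝓝 0) := tendsto_inv_atTop_zero
  have hlim : Tendsto (fun t : ℝ => (b + p * t⁻¹) / (d + q * t⁻¹)) atTop
      (𝓝 ((b + p * 0) / (d + q * 0))) :=
    ((tendsto_const_nhds.add (hinv.const_mul p)).div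
      (tendsto_const_nhds.add (hinv.const_mul q)) (by simpa using hd))
  rw [mul_zero, mul_zero, add_zero, add_zero] at hlim
  refine hlim.congr' ?_
  filter_upwards [eventually_gt_atTop 0] with t ht
  field_simp
  ring_nf

theorem quotient_on_curve_eq_affine_div_affine {c ε t : ℝ} (hc : c ≠ 0) (hct : c + t ≠ 0) :
    (ε * c / (c + t) * (c + t) ^ 2 + c * t) / (c * (c + t) - ε * c / (c + t) * (c + t) ^ 2) =
      (ε * c + (1 + ε) * t) / ((1 - ε) * c + (1 - ε) * t) := by
  have hnum : ε * c / (c + t) * (c + t) ^ 2 + c * t = c * (ε * c + (1 + ε) * t) := by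
    field_simp; ring
  have hden : c * (c + t) - ε * c / (c + t) * (c + t) ^ 2 =
      c * ((1 - ε) * c + (1 - ε) * t) := by
    field_simp
  rw [hnum, hden, mul_div_mul_left _ _ hc]

/-- For `F(x) = c/(c+x)`, `c > 0`, the function
`G(x₁,x₂) = (x₂(c+x₁)² + cx₁)/(c(c+x₁) - x₂(c+x₁)²)` stays bounded (in fact converges
to a finite limit) along the curve `x₁ = t`, `x₂ = εc/(c+t)` as `t → +∞`, for every
`ε ∈ (0,1)`; hence it does not tend to `+∞` at the boundary. -/
theorem stmt_8 (c : ℝ) (hc : 0 < c) (G : ℝ → ℝ → ℝ)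
    (hG : ∀ x1 x2, G x1 x2 =
      (x2 * (c + x1) ^ 2 + c * x1) / (c * (c + x1) - x2 * (c + x1) ^ 2)) :
    ∀ ε : ℝ, 0 < ε → ε < 1 →
      (∃ L : ℝ, Tendsto (fun t => G t (ε * c / (c + t))) atTop (nhds L)) ∧
      ¬ Tendsto (fun t => G t (ε * c / (c + t))) atTop atTop := by
  intro ε _ hε1
  have hlim : Tendsto (fun t => G t (ε * c / (c + t))) atTop (𝓝 ((1 + ε) / (1 - ε))) := by
    refine (tendsto_affine_div_affine_atTop (ε * c) (1 + ε) ((1 - ε) * c) (1 - ε)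
      (sub_ne_zero.mpr hε1.ne')).congr' ?_
    filter_upwards [eventually_gt_atTop 0] with t ht
    rw [hG, quotient_on_curve_eq_affine_div_affine hc.ne' (by linarith)]
  exact ⟨⟨_, hlim⟩, not_tendsto_atTop_of_tendsto_nhds hlim⟩
end

section
/- Fix m > 0. The map G : [0,∞)^2 → [0,∞)^2, G(U,V) = (e^{2m(U−V)} U, e^{2m(V−U)} V), has Jacobian determinant det J_G(U,V) = 1 + 2m(U+V) > 0 at every point, and G is a bijection from [0,∞)^2 onto [0,∞)^2 (and a diffeomorphism on the open quadrant). -/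
open Real Set ContinuousLinearMap

noncomputable def Dm (m : ℝ) (p : ℝ × ℝ) : (ℝ × ℝ) →L[ℝ] ℝ × ℝ :=
  (Real.exp (2*m*(p.1-p.2)) • (fst ℝ ℝ ℝ)
    + p.1 • (Real.exp (2*m*(p.1-p.2)) • ((2*m) • (fst ℝ ℝ ℝ - snd ℝ ℝ ℝ)))).prod
  (Real.exp (2*m*(p.2-p.1)) • (snd ℝ ℝ ℝ)
    + p.2 • (Real.exp (2*m*(p.2-p.1)) • ((2*m) • (snd ℝ ℝ ℝ - fst ℝ ℝ ℝ))))

lemma hasD (m : ℝ) (p : ℝ × ℝ) :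
    HasFDerivAt (fun p : ℝ × ℝ =>
      (Real.exp (2 * m * (p.1 - p.2)) * p.1, Real.exp (2 * m * (p.2 - p.1)) * p.2))
      (Dm m p) p := by
  have h1 : HasFDerivAt (fun p : ℝ×ℝ => 2*m*(p.1-p.2))
      ((2*m) • (fst ℝ ℝ ℝ - snd ℝ ℝ ℝ)) p :=
    ((hasFDerivAt_fst.sub hasFDerivAt_snd).const_mul (2*m))
  have h2 : HasFDerivAt (fun p : ℝ×ℝ => 2*m*(p.2-p.1))
      ((2*m) • (snd ℝ ℝ ℝ - fst ℝ ℝ ℝ)) p :=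
    ((hasFDerivAt_snd.sub hasFDerivAt_fst).const_mul (2*m))
  exact ((h1.exp.mul hasFDerivAt_fst)).prodMk ((h2.exp.mul hasFDerivAt_snd))

lemma detD (m : ℝ) (p : ℝ × ℝ) :
    LinearMap.det (Dm m p).toLinearMap = 1 + 2 * m * (p.1 + p.2) := by
  rw [← LinearMap.det_toMatrix (Module.Basis.finTwoProd ℝ), Matrix.det_fin_two]
  have e1 : Real.exp (2*m*(p.1-p.2)) * Real.exp (2*m*(p.2-p.1)) = 1 := by
    rw [← Real.exp_add]; ring_nf; exact Real.exp_zero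
  simp [LinearMap.toMatrix_apply, Dm, Module.Basis.finTwoProd]
  linear_combination (1 + 2*m*p.1 + 2*m*p.2) * e1

lemma strictAntiF (m x y : ℝ) (hm : 0 < m) (hx : 0 ≤ x) (hy : 0 ≤ y) :
    StrictAnti (fun t : ℝ => x * Real.exp (-(2*m*t)) - y * Real.exp (2*m*t) - t) := by
  intro s t hst
  have h1 : Real.exp (-(2*m*t)) ≤ Real.exp (-(2*m*s)) := Real.exp_le_exp.2 (by nlinarith)
  have h2 : Real.exp (2*m*s) ≤ Real.exp (2*m*t) := Real.exp_le_exp.2 (by nlinarith)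
  have := mul_le_mul_of_nonneg_left h1 hx
  have := mul_le_mul_of_nonneg_left h2 hy
  simp only
  linarith

lemma existsT (m x y : ℝ) (hm : 0 < m) (hx : 0 ≤ x) (hy : 0 ≤ y) :
    ∃ t : ℝ, x * Real.exp (-(2*m*t)) - y * Real.exp (2*m*t) - t = 0 := by
  set f : ℝ → ℝ := fun t => x * Real.exp (-(2*m*t)) - y * Real.exp (2*m*t) - t with hf
  have hcont : ContinuousOn f (Icc (-y) x) := by fun_prop
  have hab : (-y : ℝ) ≤ x := by linarith
  have hfb : f x ≤ 0 := by
    have h1 : Real.exp (-(2*m*x)) ≤ 1 := Real.exp_le_one_iff.2 (by nlinarith)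
    have := mul_le_mul_of_nonneg_left h1 hx
    have := mul_nonneg hy (Real.exp_pos (2*m*x)).le
    simp only [hf]; linarith
  have hfa : 0 ≤ f (-y) := by
    have h1 : Real.exp (2*m*(-y)) ≤ 1 := Real.exp_le_one_iff.2 (by nlinarith)
    have := mul_le_mul_of_nonneg_left h1 hy
    have := mul_nonneg hx (Real.exp_pos (-(2*m*(-y)))).le
    simp only [hf]; linarith
  have := intermediate_value_Icc' hab hcont
  obtain ⟨t, _, ht⟩ := this ⟨hfb, hfa⟩
  exact ⟨t, ht⟩

lemma surjAux (m x y : ℝ) (hm : 0 < m) (hx : 0 ≤ x) (hy : 0 ≤ y) :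
    ∃ p : ℝ × ℝ, 0 ≤ p.1 ∧ 0 ≤ p.2 ∧ (0 < x → 0 < p.1) ∧ (0 < y → 0 < p.2) ∧
      (Real.exp (2 * m * (p.1 - p.2)) * p.1, Real.exp (2 * m * (p.2 - p.1)) * p.2) = (x, y) := by
  obtain ⟨t, ht⟩ := existsT m x y hm hx hy
  refine ⟨(x * Real.exp (-(2*m*t)), y * Real.exp (2*m*t)), by positivity, by positivity,
    fun h => by positivity, fun h => by positivity, ?_⟩
  have hdiff : x * Real.exp (-(2*m*t)) - y * Real.exp (2*m*t) = t := by linarith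
  have hdiff2 : y * Real.exp (2*m*t) - x * Real.exp (-(2*m*t)) = -t := by linarith
  have e1 : Real.exp (2*m*t) * Real.exp (-(2*m*t)) = 1 := by
    rw [← Real.exp_add]; ring_nf; exact Real.exp_zero
  have e2 : Real.exp (2*m*(-t)) = Real.exp (-(2*m*t)) := by ring_nf
  simp only [hdiff, hdiff2, Prod.mk.injEq]
  rw [e2]
  constructor
  · linear_combination x * e1
  · linear_combination y * e1

lemma fzeroAux (m : ℝ) (p : ℝ × ℝ) :
    (Real.exp (2 * m * (p.1 - p.2)) * p.1) * Real.exp (-(2*m*(p.1 - p.2)))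
      - (Real.exp (2 * m * (p.2 - p.1)) * p.2) * Real.exp (2*m*(p.1 - p.2))
      - (p.1 - p.2) = 0 := by
  have e1 : Real.exp (2*m*(p.1-p.2)) * Real.exp (-(2*m*(p.1-p.2))) = 1 := by
    rw [← Real.exp_add]; ring_nf; exact Real.exp_zero
  have e2 : Real.exp (2*m*(p.2-p.1)) * Real.exp (2*m*(p.1-p.2)) = 1 := by
    rw [← Real.exp_add]; ring_nf; exact Real.exp_zero
  linear_combination p.1 * e1 - p.2 * e2

lemma injAux (m : ℝ) (hm : 0 < m) (p q : ℝ × ℝ)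
    (hp1 : 0 ≤ p.1) (hp2 : 0 ≤ p.2) (hq1 : 0 ≤ q.1) (hq2 : 0 ≤ q.2)
    (h : (Real.exp (2 * m * (p.1 - p.2)) * p.1, Real.exp (2 * m * (p.2 - p.1)) * p.2)
       = (Real.exp (2 * m * (q.1 - q.2)) * q.1, Real.exp (2 * m * (q.2 - q.1)) * q.2)) :
    p = q := by
  obtain ⟨h1, h2⟩ := Prod.mk.injEq .. ▸ h
  have hfp := fzeroAux m p
  have hfq : (Real.exp (2 * m * (p.1 - p.2)) * p.1) * Real.exp (-(2*m*(q.1 - q.2)))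
      - (Real.exp (2 * m * (p.2 - p.1)) * p.2) * Real.exp (2*m*(q.1 - q.2))
      - (q.1 - q.2) = 0 := by rw [h1, h2]; exact fzeroAux m q
  have ht : p.1 - p.2 = q.1 - q.2 := by
    apply (strictAntiF m (Real.exp (2*m*(p.1-p.2)) * p.1) (Real.exp (2*m*(p.2-p.1)) * p.2) hm
      (mul_nonneg (Real.exp_pos _).le hp1) (mul_nonneg (Real.exp_pos _).le hp2)).injective
    simp only
    linarith
  have ht2 : q.2 - q.1 = p.2 - p.1 := by linarith
  rw [← ht] at h1
  rw [ht2] at h2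
  exact Prod.ext (mul_left_cancel₀ (Real.exp_ne_zero _) h1)
    (mul_left_cancel₀ (Real.exp_ne_zero _) h2)

/-- For `m > 0`, the map `G(U,V) = (e^{2m(U-V)}U, e^{2m(V-U)}V)` has Jacobian
determinant `1 + 2m(U+V) > 0` on `[0,∞)²`, is a bijection of `[0,∞)²` onto itself,
and is a diffeomorphism on the open quadrant. -/
theorem stmt_12 (m : ℝ) (hm : 0 < m) (G : ℝ × ℝ → ℝ × ℝ)
    (hG : ∀ p : ℝ × ℝ,
      G p = (Real.exp (2 * m * (p.1 - p.2)) * p.1, Real.exp (2 * m * (p.2 - p.1)) * p.2)) :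
    (∀ p : ℝ × ℝ, 0 ≤ p.1 → 0 ≤ p.2 →
      LinearMap.det (fderiv ℝ G p).toLinearMap = 1 + 2 * m * (p.1 + p.2) ∧
      0 < 1 + 2 * m * (p.1 + p.2)) ∧
    Set.BijOn G (Set.Ici 0 ×ˢ Set.Ici 0) (Set.Ici 0 ×ˢ Set.Ici 0) ∧
    ∃ H : ℝ × ℝ → ℝ × ℝ, ContDiffOn ℝ (⊤ : ℕ∞) H (Set.Ioi 0 ×ˢ Set.Ioi 0) ∧
      ∀ p ∈ (Set.Ioi 0 ×ˢ Set.Ioi 0 : Set (ℝ × ℝ)),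
        H (G p) = p ∧ G (H p) = p ∧ H p ∈ (Set.Ioi 0 ×ˢ Set.Ioi 0 : Set (ℝ × ℝ)) := by
  have hGdef : G = fun p : ℝ × ℝ =>
      (Real.exp (2 * m * (p.1 - p.2)) * p.1, Real.exp (2 * m * (p.2 - p.1)) * p.2) := funext hG
  subst hGdef
  set G : ℝ × ℝ → ℝ × ℝ := fun p : ℝ × ℝ =>
      (Real.exp (2 * m * (p.1 - p.2)) * p.1, Real.exp (2 * m * (p.2 - p.1)) * p.2) with hGd
  refine ⟨?_, ?_, ?_⟩
  · intro p hp1 hp2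
    refine ⟨?_, by nlinarith⟩
    rw [(hasD m p).fderiv]
    exact detD m p
  · refine ⟨?_, ?_, ?_⟩
    · rintro p ⟨hp1, hp2⟩
      exact ⟨mul_nonneg (Real.exp_pos _).le hp1, mul_nonneg (Real.exp_pos _).le hp2⟩
    · rintro p ⟨hp1, hp2⟩ q ⟨hq1, hq2⟩ h
      exact injAux m hm p q hp1 hp2 hq1 hq2 h
    · rintro q ⟨hq1, hq2⟩
      obtain ⟨p, h1, h2, _, _, hGp⟩ := surjAux m q.1 q.2 hm hq1 hq2
      exact ⟨p, ⟨h1, h2⟩, by simpa [hGd] using hGp⟩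
  · set s : Set (ℝ × ℝ) := Set.Ioi 0 ×ˢ Set.Ioi 0 with hsd
    have hs_open : IsOpen s := isOpen_Ioi.prod isOpen_Ioi
    have hbij : Set.BijOn G s s := by
      refine ⟨?_, ?_, ?_⟩
      · rintro p ⟨hp1, hp2⟩
        exact ⟨mul_pos (Real.exp_pos _) hp1, mul_pos (Real.exp_pos _) hp2⟩
      · rintro p ⟨hp1, hp2⟩ q ⟨hq1, hq2⟩ h
        exact injAux m hm p q hp1.le hp2.le hq1.le hq2.le h
      · rintro q ⟨hq1, hq2⟩
        obtain ⟨p, _, _, h3, h4, hGp⟩ := surjAux m q.1 q.2 hm hq1.le hq2.le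
        exact ⟨p, ⟨h3 hq1, h4 hq2⟩, by simpa [hGd] using hGp⟩
    set H : ℝ × ℝ → ℝ × ℝ := Function.invFunOn G s with hHd
    have hinv : Set.InvOn H G s s := hbij.invOn_invFunOn
    have hmem : ∀ q ∈ s, H q ∈ s := fun q hq =>
      Function.invFunOn_mem (f := G) (s := s) (hbij.surjOn hq)
    refine ⟨H, ?_, fun p hp => ⟨hinv.1 hp, hinv.2 hp, hmem p hp⟩⟩
    rw [hs_open.contDiffOn_iff]
    intro q hq
    obtain ⟨p, hps, hGp⟩ := hbij.surjOn hq
    obtain ⟨hp1, hp2⟩ := hps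
    have hsm : ContDiff ℝ (⊤ : ℕ∞) G := by
      apply ContDiff.prodMk <;> fun_prop
    have hdet : LinearMap.det (Dm m p).toLinearMap ≠ 0 := by
      rw [detD]; nlinarith [le_of_lt (Set.mem_Ioi.mp hp1), le_of_lt (Set.mem_Ioi.mp hp2)]
    let eL : (ℝ × ℝ) ≃L[ℝ] (ℝ × ℝ) :=
      ((Dm m p).toLinearMap.equivOfDetNeZero hdet).toContinuousLinearEquiv
    have hcoe : ((eL : (ℝ × ℝ) ≃L[ℝ] ℝ × ℝ) : (ℝ × ℝ) →L[ℝ] ℝ × ℝ) = Dm m p := rfl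
    have hf' : HasFDerivAt G ((eL : (ℝ × ℝ) ≃L[ℝ] ℝ × ℝ) : (ℝ × ℝ) →L[ℝ] ℝ × ℝ) p := by
      have h0 := hasD m p
      rw [← hcoe] at h0
      exact h0
    have hca : ContDiffAt ℝ (⊤ : ℕ∞) G p := hsm.contDiffAt
    have h1 : ContDiffAt ℝ (⊤ : ℕ∞) (hca.localInverse hf' (by simp)) q := by
      rw [← hGp]; exact hca.to_localInverse hf' (by simp)
    have hsf : HasStrictFDerivAt G (↑eL) p := hca.hasStrictFDerivAt' hf' (by simp)
    have hlid : hca.localInverse hf' (by simp) = hsf.localInverse G eL p := rfl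
    have hev1 : ∀ᶠ y in nhds q, G (hsf.localInverse G eL p y) = y := by
      rw [← hGp]; exact hsf.eventually_right_inverse
    have hcont : ContinuousAt (hsf.localInverse G eL p) q := by
      rw [← hGp]; exact hsf.localInverse_continuousAt
    have hval : hsf.localInverse G eL p q = p := by
      rw [← hGp]; exact hsf.localInverse_apply_image
    have hev2 : ∀ᶠ y in nhds q, hsf.localInverse G eL p y ∈ s :=
      hcont.eventually_mem (by rw [hval]; exact hs_open.mem_nhds ⟨hp1, hp2⟩)
    have heq : H =ᶠ[nhds q] hca.localInverse hf' (by simp) := by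
      rw [hlid]
      filter_upwards [hev1, hev2] with y hyG hyS
      have := hinv.1 hyS
      rwa [hyG] at this
    exact h1.congr_of_eventuallyEq heq
end

section
/- Fix m > 0. With (U,V) = G^{-1}(x_1,x_2) as in LeBrun's construction, x_1 ∂Φ̃_m/∂x_1 + x_2 ∂Φ̃_m/∂x_2 = U + V + 4mUV, and this quantity tends to +∞ as ||(x_1,x_2)|| → +∞ in [0,∞)^2. -/
/-- For LeBrun's construction with `m > 0`:
`x₁ ∂Φ̃_m/∂x₁ + x₂ ∂Φ̃_m/∂x₂ = U + V + 4mUV`, where `x₁ = e^{2m(U-V)}U`,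
`x₂ = e^{2m(V-U)}V`, `∂Φ̃_m/∂x₁ = (1+2mV)e^{2m(V-U)}`, `∂Φ̃_m/∂x₂ = (1+2mU)e^{2m(U-V)}`,
and this quantity tends to `+∞` as `‖(x₁,x₂)‖ → +∞` in `[0,∞)²`. -/
theorem stmt_14 (m : ℝ) (hm : 0 < m) :
    (∀ U V : ℝ, 0 ≤ U → 0 ≤ V →
      (Real.exp (2 * m * (U - V)) * U) * ((1 + 2 * m * V) * Real.exp (2 * m * (V - U)))
        + (Real.exp (2 * m * (V - U)) * V) * ((1 + 2 * m * U) * Real.exp (2 * m * (U - V)))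
        = U + V + 4 * m * U * V) ∧
    (∀ C : ℝ, ∃ R : ℝ, ∀ U V : ℝ, 0 ≤ U → 0 ≤ V →
      R ≤ ‖((Real.exp (2 * m * (U - V)) * U, Real.exp (2 * m * (V - U)) * V) : ℝ × ℝ)‖ →
      C ≤ U + V + 4 * m * U * V) := by
  constructor
  · intro U V hU hV
    have h1 : Real.exp (2 * m * (U - V)) * Real.exp (2 * m * (V - U)) = 1 := by
      rw [← Real.exp_add]; ring_nf; exact Real.exp_zero
    linear_combination (U*(1+2*m*V)+V*(1+2*m*U)) * h1
  · intro C
    set C' := max C 1 with hC'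
    refine ⟨Real.exp (2 * m * C') * C' + 1, ?_⟩
    intro U V hU hV hR
    by_contra h
    push_neg at h
    have hC1 : (1:ℝ) ≤ C' := le_max_right _ _
    have hCC : C ≤ C' := le_max_left _ _
    have hUC : U < C' := by nlinarith [mul_nonneg (mul_nonneg hm.le hU) hV]
    have hVC : V < C' := by nlinarith [mul_nonneg (mul_nonneg hm.le hU) hV]
    have key : ∀ a b : ℝ, 0 ≤ a → a < C' → 0 ≤ b →
        Real.exp (2 * m * (a - b)) * a ≤ Real.exp (2 * m * C') * C' := by
      intro a b ha haC hb
      have he : Real.exp (2 * m * (a - b)) ≤ Real.exp (2 * m * C') := by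
        apply Real.exp_le_exp.2
        nlinarith
      nlinarith [Real.exp_pos (2 * m * (a - b)), Real.exp_pos (2 * m * C')]
    have h1 := key U V hU hUC hV
    have h2 := key V U hV hVC hU
    rw [Prod.norm_def] at hR
    simp only [Real.norm_eq_abs] at hR
    rw [abs_of_nonneg (by positivity), abs_of_nonneg (by positivity)] at hR
    have := max_le h1 h2
    linarith [le_trans hR this]
end

section
/- Fix m > 0 and define Ψ : C^2 → C^2 by Ψ(z_1,z_2) = ((1+2mV)^{1/2} e^{m(V−U)} z_1, (1+2mU)^{1/2} e^{m(U−V)} z_2), where (U,V) is determined by |z_1|^2 = e^{2m(U−V)}U, |z_2|^2 = e^{2m(V−U)}V with U,V ≥ 0. Then Ψ is a bijection of C^2 onto C^2. -/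
/-!
Writing `Ψ z = (c₁ z₁, c₂ z₂)` with positive real factors `c₁, c₂` depending on `(U, V)`, the
defining relations give `‖(Ψ z)₁‖² = (1 + 2mV) U` and `‖(Ψ z)₂‖² = (1 + 2mU) V`. The map
`(U, V) ↦ ((1 + 2mV) U, (1 + 2mU) V)` is a bijection of `[0, ∞)²`, so `‖Ψ z‖` determines `(U, V)`,
hence the factors `c₁, c₂`, hence `z`; and any `w` is hit by `(w₁ / c₁, w₂ / c₂)` for the `(U, V)`
solving `(1 + 2mV) U = ‖w₁‖²`, `(1 + 2mU) V = ‖w₂‖²`. Both existence statements in `[0, ∞)²` are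
one-variable intermediate value arguments.
-/

open Real

namespace LeBrun

variable {m a b : ℝ}

/-- With `t = U - V` the system reads `U = a e^{-2mt}`, `V = b e^{2mt}`,
`t = a e^{-2mt} - b e^{2mt}`. -/
theorem exists_nonneg_eq_exp_mul (hm : 0 ≤ m) (ha : 0 ≤ a) (hb : 0 ≤ b) :
    ∃ U V : ℝ, 0 ≤ U ∧ 0 ≤ V ∧
      a = exp (2 * m * (U - V)) * U ∧ b = exp (2 * m * (V - U)) * V := by
  set f : ℝ → ℝ := fun t => a * exp (-(2 * m * t)) - b * exp (2 * m * t) - t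
  set T := a + b
  have hT : 0 ≤ T := add_nonneg ha hb
  have hf_T : f T ≤ 0 := by
    have : exp (-(2 * m * T)) ≤ 1 := exp_le_one_iff.mpr (by nlinarith)
    have : 0 ≤ b * exp (2 * m * T) := by positivity
    simp only [f, T]
    nlinarith
  have hf_negT : 0 ≤ f (-T) := by
    have : 1 ≤ exp (-(2 * m * -T)) := one_le_exp_iff.mpr (by nlinarith)
    have : exp (2 * m * -T) ≤ 1 := exp_le_one_iff.mpr (by nlinarith)
    simp only [f, T]
    nlinarith
  obtain ⟨t, -, hft⟩ := intermediate_value_Icc' (by linarith : -T ≤ T)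
    (by fun_prop : ContinuousOn f (Set.Icc (-T) T)) ⟨hf_T, hf_negT⟩
  have ht : a * exp (-(2 * m * t)) - b * exp (2 * m * t) = t := by
    simp only [f] at hft; linarith
  refine ⟨a * exp (-(2 * m * t)), b * exp (2 * m * t), by positivity, by positivity, ?_, ?_⟩
  · rw [ht, mul_left_comm, ← exp_add, add_neg_cancel, exp_zero, mul_one]
  · rw [← neg_sub, ht, mul_left_comm, ← exp_add, mul_neg, neg_add_cancel, exp_zero, mul_one]

/-- With `U = a / (1 + 2mV)` the system reduces to `V + 2maV / (1 + 2mV) = b`. -/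
theorem exists_nonneg_eq_one_add_mul (hm : 0 ≤ m) (ha : 0 ≤ a) (hb : 0 ≤ b) :
    ∃ U V : ℝ, 0 ≤ U ∧ 0 ≤ V ∧ a = (1 + 2 * m * V) * U ∧ b = (1 + 2 * m * U) * V := by
  set g : ℝ → ℝ := fun V => V + 2 * m * a * V / (1 + 2 * m * V)
  have hg : ContinuousOn g (Set.Icc 0 b) :=
    continuousOn_id.add <| ContinuousOn.div (by fun_prop) (by fun_prop)
      fun V hV => by nlinarith [hV.1]
  have hg_b : b ≤ g b := le_add_of_nonneg_right (by positivity)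
  obtain ⟨V, hV, hgV⟩ := intermediate_value_Icc hb hg ⟨by simp [g, hb], hg_b⟩
  have hden : 0 < 1 + 2 * m * V := by nlinarith [hV.1]
  refine ⟨a / (1 + 2 * m * V), V, by positivity, hV.1, by field_simp, ?_⟩
  simp only [g] at hgV
  field_simp at hgV ⊢
  linarith

theorem eq_of_one_add_mul_eq (hm : 0 ≤ m) {U V U' V' : ℝ} (hV : 0 ≤ V) (hU' : 0 ≤ U')
    (h₁ : (1 + 2 * m * V) * U = (1 + 2 * m * V') * U')
    (h₂ : (1 + 2 * m * U) * V = (1 + 2 * m * U') * V') :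
    U = U' ∧ V = V' := by
  have hU : (U - U') * (1 + 2 * m * (V + U')) = 0 := by
    linear_combination (1 + 2 * m * U') * h₁ - 2 * m * U' * h₂
  have hUU' : U = U' := sub_eq_zero.mp <| (mul_eq_zero.mp hU).resolve_right (by nlinarith)
  subst hUU'
  exact ⟨rfl, mul_left_cancel₀ (by nlinarith) h₂⟩

/-- The factor multiplying `z₁` in `Ψ`; the factor multiplying `z₂` is `scale m V U`. -/
noncomputable def scale (m U V : ℝ) : ℝ := √(1 + 2 * m * V) * exp (m * (V - U))

theorem scale_pos (hm : 0 ≤ m) {V : ℝ} (hV : 0 ≤ V) (U : ℝ) : 0 < scale m U V :=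
  mul_pos (sqrt_pos.mpr (by nlinarith)) (exp_pos _)

theorem scale_sq_mul (hm : 0 ≤ m) {V : ℝ} (hV : 0 ≤ V) (U : ℝ) :
    scale m U V ^ 2 * (exp (2 * m * (U - V)) * U) = (1 + 2 * m * V) * U := by
  have hexp : exp (m * (V - U)) ^ 2 * exp (2 * m * (U - V)) = 1 := by
    rw [← exp_nat_mul, ← exp_add, ← exp_zero]
    ring_nf
  rw [scale, mul_pow, sq_sqrt (by nlinarith)]
  linear_combination (1 + 2 * m * V) * U * hexp

theorem norm_ofReal_mul_sq (c : ℝ) (z : ℂ) : ‖(c : ℂ) * z‖ ^ 2 = c ^ 2 * ‖z‖ ^ 2 := by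
  rw [norm_mul, Complex.norm_real, mul_pow, norm_eq_abs, sq_abs]

def IsMap (m : ℝ) (Ψ : ℂ × ℂ → ℂ × ℂ) : Prop :=
  ∀ z : ℂ × ℂ, ∀ U V : ℝ, 0 ≤ U → 0 ≤ V →
    ‖z.1‖ ^ 2 = exp (2 * m * (U - V)) * U → ‖z.2‖ ^ 2 = exp (2 * m * (V - U)) * V →
    Ψ z = (scale m U V * z.1, scale m V U * z.2)

variable {Ψ : ℂ × ℂ → ℂ × ℂ}

theorem IsMap.injective (hm : 0 ≤ m) (hΨ : IsMap m Ψ) : Function.Injective Ψ := by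
  intro z z' hzz'
  obtain ⟨U, V, hU, hV, h₁, h₂⟩ :=
    exists_nonneg_eq_exp_mul hm (sq_nonneg ‖z.1‖) (sq_nonneg ‖z.2‖)
  obtain ⟨U', V', hU', hV', h₁', h₂'⟩ :=
    exists_nonneg_eq_exp_mul hm (sq_nonneg ‖z'.1‖) (sq_nonneg ‖z'.2‖)
  rw [hΨ z U V hU hV h₁ h₂, hΨ z' U' V' hU' hV' h₁' h₂', Prod.mk.injEq] at hzz'
  obtain ⟨hw₁, hw₂⟩ := hzz'
  have hn₁ := congrArg (‖·‖ ^ 2) hw₁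
  have hn₂ := congrArg (‖·‖ ^ 2) hw₂
  simp only [norm_ofReal_mul_sq, h₁, h₂, h₁', h₂', scale_sq_mul hm hV,
    scale_sq_mul hm hU, scale_sq_mul hm hV', scale_sq_mul hm hU'] at hn₁ hn₂
  obtain ⟨rfl, rfl⟩ := eq_of_one_add_mul_eq hm hV hU' hn₁ hn₂
  exact Prod.ext
    (mul_left_cancel₀ (Complex.ofReal_ne_zero.mpr (scale_pos hm hV U).ne') hw₁)
    (mul_left_cancel₀ (Complex.ofReal_ne_zero.mpr (scale_pos hm hU V).ne') hw₂)

theorem IsMap.surjective (hm : 0 ≤ m) (hΨ : IsMap m Ψ) : Function.Surjective Ψ := by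
  intro w
  obtain ⟨U, V, hU, hV, h₁, h₂⟩ :=
    exists_nonneg_eq_one_add_mul hm (sq_nonneg ‖w.1‖) (sq_nonneg ‖w.2‖)
  have hc₁ := scale_pos hm hV U
  have hc₂ := scale_pos hm hU V
  set z : ℂ × ℂ := (((scale m U V)⁻¹ : ℝ) * w.1, ((scale m V U)⁻¹ : ℝ) * w.2)
  have hz₁ : ‖z.1‖ ^ 2 = exp (2 * m * (U - V)) * U := by
    rw [norm_ofReal_mul_sq, h₁, ← scale_sq_mul hm hV U, inv_pow,
      inv_mul_cancel_left₀ (by positivity)]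
  have hz₂ : ‖z.2‖ ^ 2 = exp (2 * m * (V - U)) * V := by
    rw [norm_ofReal_mul_sq, h₂, ← scale_sq_mul hm hU V, inv_pow,
      inv_mul_cancel_left₀ (by positivity)]
  refine ⟨z, ?_⟩
  rw [hΨ z U V hU hV hz₁ hz₂]
  simp only [z, ← mul_assoc, ← Complex.ofReal_mul, mul_inv_cancel₀ hc₁.ne',
    mul_inv_cancel₀ hc₂.ne', Complex.ofReal_one, one_mul]

end LeBrun

/-- For LeBrun's Ricci-flat Kähler forms `ω_m`, `m > 0`: the map
`Ψ(z₁,z₂) = ((1+2mV)^{1/2} e^{m(V-U)} z₁, (1+2mU)^{1/2} e^{m(U-V)} z₂)`, where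
`(U,V) ∈ [0,∞)²` is determined by `|z₁|² = e^{2m(U-V)}U`, `|z₂|² = e^{2m(V-U)}V`,
is a bijection of `ℂ²` onto itself. -/
theorem stmt_15 (m : ℝ) (hm : 0 < m) (Ψ : ℂ × ℂ → ℂ × ℂ)
    (hΨ : ∀ z : ℂ × ℂ, ∀ U V : ℝ, 0 ≤ U → 0 ≤ V →
      ‖z.1‖ ^ 2 = Real.exp (2 * m * (U - V)) * U →
      ‖z.2‖ ^ 2 = Real.exp (2 * m * (V - U)) * V →
      Ψ z = ((Real.sqrt (1 + 2 * m * V) * Real.exp (m * (V - U)) : ℝ) * z.1,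
             (Real.sqrt (1 + 2 * m * U) * Real.exp (m * (U - V)) : ℝ) * z.2)) :
    Function.Bijective Ψ :=
  ⟨LeBrun.IsMap.injective hm.le hΨ, LeBrun.IsMap.surjective hm.le hΨ⟩
end

section
/- Let p ∈ N, p ≥ 1, and G(x_1,x_2) = (x_2 + p x_1 (1+x_1)^{−p−1})/((1+x_1)^{−p} − x_2), defined for x_1 ≥ 0, 0 ≤ x_2 < (1+x_1)^{−p}. For every ε ∈ (0,1), along the curve x_1 = t, x_2 = ε(1+t)^{−p}, the function G stays bounded as t → +∞; hence G does not tend to +∞ at the boundary of its domain. -/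
open Filter

/-!
On the curve `x₂ = ε (1+x₁)^{-p}` the common factor `(1+x₁)^{-p}` cancels from numerator and
denominator of `G`, leaving `(ε + p (1 - (1+x₁)⁻¹))/(1-ε)`, which converges to `(ε + p)/(1-ε)`.
-/

lemma div_along_scaled_rpow_curve {a ε t : ℝ} (ht : 0 < 1 + t) (hε : ε ≠ 1) :
    (ε * (1 + t) ^ (-a) + a * t * (1 + t) ^ (-a - 1)) / ((1 + t) ^ (-a) - ε * (1 + t) ^ (-a)) =
      (ε + a * (1 - (1 + t)⁻¹)) / (1 - ε) := by
  have hpow : (1 + t) ^ (-a - 1) = (1 + t) ^ (-a) * (1 + t)⁻¹ := by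
    rw [sub_eq_add_neg, Real.rpow_add ht, Real.rpow_neg_one]
  have hpos : 0 < (1 + t) ^ (-a) := Real.rpow_pos_of_pos ht _
  have h1ε : 1 - ε ≠ 0 := sub_ne_zero.mpr hε.symm
  rw [hpow]
  field_simp
  ring

lemma tendsto_const_add_mul_one_sub_inv_div (a ε : ℝ) :
    Tendsto (fun t : ℝ => (ε + a * (1 - (1 + t)⁻¹)) / (1 - ε)) atTop
      (nhds ((ε + a) / (1 - ε))) := by
  have hinv : Tendsto (fun t : ℝ => (1 + t)⁻¹) atTop (nhds 0) :=
    tendsto_inv_atTop_zero.comp (tendsto_atTop_add_const_left _ 1 tendsto_id)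
  simpa using (((hinv.const_sub 1).const_mul a).const_add ε).div_const (1 - ε)

theorem stmt_16_general (p : ℕ) (G : ℝ → ℝ → ℝ)
    (hG : ∀ x1 x2, G x1 x2 =
      (x2 + p * x1 * (1 + x1) ^ (-(p : ℝ) - 1)) / ((1 + x1) ^ (-(p : ℝ)) - x2)) :
    ∀ ε : ℝ, 0 < ε → ε < 1 →
      (∃ L : ℝ, Tendsto (fun t => G t (ε * (1 + t) ^ (-(p : ℝ)))) atTop (nhds L)) ∧
      ¬ Tendsto (fun t => G t (ε * (1 + t) ^ (-(p : ℝ)))) atTop atTop := by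
  intro ε _ hε1
  have hlim : Tendsto (fun t => G t (ε * (1 + t) ^ (-(p : ℝ)))) atTop
      (nhds ((ε + p) / (1 - ε))) := by
    refine (tendsto_const_add_mul_one_sub_inv_div p ε).congr' ?_
    filter_upwards [eventually_gt_atTop (-1)] with t ht
    rw [hG, div_along_scaled_rpow_curve (by linarith) hε1.ne]
  exact ⟨⟨_, hlim⟩, not_tendsto_atTop_of_tendsto_nhds hlim⟩

/-- For `F(x) = (1+x)^{-p}`, `p ∈ ℕ⁺`, the function
`G(x₁,x₂) = (x₂ + p x₁ (1+x₁)^{-p-1})/((1+x₁)^{-p} - x₂)` stays bounded (converges)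
along the curve `x₁ = t`, `x₂ = ε(1+t)^{-p}` as `t → +∞`, for every `ε ∈ (0,1)`;
hence it does not tend to `+∞` at the boundary. -/
theorem stmt_16 (p : ℕ) (hp : 1 ≤ p) (G : ℝ → ℝ → ℝ)
    (hG : ∀ x1 x2, G x1 x2 =
      (x2 + p * x1 * (1 + x1) ^ (-(p : ℝ) - 1)) / ((1 + x1) ^ (-(p : ℝ)) - x2)) :
    ∀ ε : ℝ, 0 < ε → ε < 1 →
      (∃ L : ℝ, Tendsto (fun t => G t (ε * (1 + t) ^ (-(p : ℝ)))) atTop (nhds L)) ∧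
      ¬ Tendsto (fun t => G t (ε * (1 + t) ^ (-(p : ℝ)))) atTop atTop :=
  stmt_16_general p G hG
end

section
/- Let p > 0 and F : [0,1) → R^+, F(x) = (1−x)^p, and let G(x_1,x_2) = (x_2 + p x_1 (1−x_1)^{p−1})/((1−x_1)^p − x_2) on {(x_1,x_2) : 0 ≤ x_1 < 1, 0 ≤ x_2 < (1−x_1)^p}. Then G tends to +∞ as (x_1,x_2) tends to the boundary of the region, i.e. as (1−x_1)^p − x_2 → 0. -/
/-- For `F(x) = (1-x)^p`, `p > 0`, the function
`G(x₁,x₂) = (x₂ + p x₁ (1-x₁)^{p-1})/((1-x₁)^p - x₂)` tends to `+∞` as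
`(1-x₁)^p - x₂ → 0` on `{0 ≤ x₁ < 1, 0 ≤ x₂ < (1-x₁)^p}`. -/
theorem stmt_17 (p : ℝ) (hp : 0 < p) (G : ℝ → ℝ → ℝ)
    (hG : ∀ x1 x2, G x1 x2 =
      (x2 + p * x1 * (1 - x1) ^ (p - 1)) / ((1 - x1) ^ p - x2)) :
    ∀ C : ℝ, ∃ δ > (0 : ℝ), ∀ x1 x2 : ℝ, 0 ≤ x1 → x1 < 1 → 0 ≤ x2 →
      x2 < (1 - x1) ^ p → (1 - x1) ^ p - x2 < δ → C ≤ G x1 x2 := by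
  intro C
  set M : ℝ := max C 1 with hMdef
  have hM1 : (1 : ℝ) ≤ M := le_max_right _ _
  have hMC : C ≤ M := le_max_left _ _
  have hM0 : (0 : ℝ) < M := lt_of_lt_of_le one_pos hM1
  set a : ℝ := min (1/2) (p / (2 * M)) with hadef
  have ha0 : 0 < a := lt_min (by norm_num) (div_pos hp (by linarith))
  have ha1 : a ≤ 1/2 := min_le_left _ _
  have ha2 : a ≤ p / (2 * M) := min_le_right _ _
  have hap : (0:ℝ) < a ^ p := Real.rpow_pos_of_pos ha0 p
  refine ⟨min (a ^ p / 2) (a ^ p / (2 * M)), lt_min (by positivity) (by positivity), ?_⟩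
  intro x1 x2 hx10 hx11 hx20 hx2lt hdlt
  have h1x : 0 < 1 - x1 := by linarith
  have hd0 : 0 < (1 - x1) ^ p - x2 := by linarith
  have hpow : (1 - x1) ^ p = (1 - x1) ^ (p - 1) * (1 - x1) := by
    rw [Real.rpow_sub h1x, Real.rpow_one]
    field_simp
  have hpow1pos : 0 < (1 - x1) ^ (p - 1) := Real.rpow_pos_of_pos h1x _
  rw [hG]
  rw [le_div_iff₀ hd0]
  rcases le_or_gt (1 - x1) a with hcase | hcase
  · -- x1 near 1
    have hx1half : (1:ℝ)/2 ≤ x1 := by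
      have : 1 - x1 ≤ 1/2 := le_trans hcase ha1
      linarith
    have key : M * (1 - x1) ≤ p / 2 := by
      have : M * (1 - x1) ≤ M * (p / (2 * M)) :=
        mul_le_mul_of_nonneg_left (le_trans hcase ha2) (le_of_lt hM0)
      have h2 : M * (p / (2 * M)) = p / 2 := by field_simp
      linarith
    have step : M * ((1 - x1) ^ p - x2) ≤ p * x1 * (1 - x1) ^ (p - 1) := by
      have h3 : M * ((1 - x1) ^ p - x2) ≤ M * (1 - x1) ^ p := by
        have := mul_le_mul_of_nonneg_left (sub_le_self ((1-x1)^p) hx20) (le_of_lt hM0)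
        linarith [this]
      have h4 : M * (1 - x1) ^ p ≤ (p / 2) * (1 - x1) ^ (p - 1) := by
        rw [hpow]
        calc M * ((1 - x1) ^ (p - 1) * (1 - x1))
            = (M * (1 - x1)) * (1 - x1) ^ (p - 1) := by ring
          _ ≤ (p / 2) * (1 - x1) ^ (p - 1) :=
              mul_le_mul_of_nonneg_right key (le_of_lt hpow1pos)
      have h5 : (p / 2) * (1 - x1) ^ (p - 1) ≤ p * x1 * (1 - x1) ^ (p - 1) := by
        apply mul_le_mul_of_nonneg_right _ (le_of_lt hpow1pos)
        nlinarith
      linarith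
    calc C * ((1 - x1) ^ p - x2) ≤ M * ((1 - x1) ^ p - x2) :=
          mul_le_mul_of_nonneg_right hMC (le_of_lt hd0)
      _ ≤ p * x1 * (1 - x1) ^ (p - 1) := step
      _ ≤ x2 + p * x1 * (1 - x1) ^ (p - 1) := by linarith
  · -- 1 - x1 bounded below by a
    have hpowa : a ^ p ≤ (1 - x1) ^ p :=
      Real.rpow_le_rpow (le_of_lt ha0) (le_of_lt hcase) (le_of_lt hp)
    have hδ : (1 - x1) ^ p - x2 < a ^ p / (2 * M) :=
      lt_of_lt_of_le hdlt (min_le_right _ _)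
    have hδ2 : (1 - x1) ^ p - x2 < a ^ p / 2 :=
      lt_of_lt_of_le hdlt (min_le_left _ _)
    have hx2big : a ^ p / 2 ≤ x2 := by linarith
    have : M * ((1 - x1) ^ p - x2) ≤ a ^ p / 2 := by
      have := mul_le_mul_of_nonneg_left (le_of_lt hδ) (le_of_lt hM0)
      have h2 : M * (a ^ p / (2 * M)) = a ^ p / 2 := by field_simp
      linarith
    have hterm : 0 ≤ p * x1 * (1 - x1) ^ (p - 1) := by positivity
    calc C * ((1 - x1) ^ p - x2) ≤ M * ((1 - x1) ^ p - x2) :=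
          mul_le_mul_of_nonneg_right hMC (le_of_lt hd0)
      _ ≤ a ^ p / 2 := this
      _ ≤ x2 := hx2big
      _ ≤ x2 + p * x1 * (1 - x1) ^ (p - 1) := by linarith
end
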